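/- arXiv:math/0602135 — 2 statements merged into one kernel-verified Lean document; each statement's English description precedes it below -/
import Mathlib

section
/- Let f be a continuous positive monotone density on ℝ, let E ∈ {−∞, +∞} be the end at which f attains its infimum, and set f(E) = lim_{x→E} f(x) = inf f. Assume f is not integrable on any neighborhood of E. Then for every V > 0 the infimum of P(U) over all open sets U ⊆ ℝ with vol(U) = V equals 2 f(E); moreover, there is a sequence of bounded open intervals of weighted volume V going off to E whose weighted perimeters converge to 2 f(E). -/
open Filter MeasureTheory Set

/-- Weighted volume of a set `Ω ⊆ ℝ` with respect to the density `f`. -/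
noncomputable def wvol (f : ℝ → ℝ) (Ω : Set ℝ) : ENNReal :=
  ∫⁻ x in Ω, ENNReal.ofReal (f x)

/-- Weighted perimeter of a set `Ω ⊆ ℝ`: the sum of `f` over the topological
boundary of `Ω`. -/
noncomputable def wper (f : ℝ → ℝ) (Ω : Set ℝ) : ENNReal :=
  ∑' x : frontier Ω, ENNReal.ofReal (f x)

open Topology

/-! An open set of finite weighted volume contains no half-line, because both ends of `ℝ` carry
infinite weight: the end `E` by hypothesis, the other one because there `f` is bounded below by a
positive constant. So every point of such a set has boundary points on both sides, and its
perimeter is at least `2 inf f`. Conversely, non-integrability at `E` lets the intermediate value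
theorem place intervals of volume `V` arbitrarily far towards `E`, and by monotonicity both
endpoint values then tend to `inf f`. Reflecting through `x ↦ -x` turns the antitone case into
the monotone one. -/

noncomputable def isoProfile (f : ℝ → ℝ) (V : ℝ) : ENNReal :=
  sInf {p : ENNReal | ∃ U : Set ℝ, IsOpen U ∧ wvol f U = ENNReal.ofReal V ∧ wper f U = p}

lemma IsPreconnected.inter_frontier_nonempty {X : Type*} [TopologicalSpace X] {s t : Set X}
    (hs : IsPreconnected s) (hst : (s ∩ t).Nonempty) (hs_t : (s \ t).Nonempty) :
    (s ∩ frontier t).Nonempty := by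
  by_contra h
  have hsub : s ⊆ interior t ∪ (closure t)ᶜ := fun x hx => by
    by_cases hxc : x ∈ closure t
    · exact Or.inl (not_not.1 fun hxi => h ⟨x, hx, hxc, hxi⟩)
    · exact Or.inr hxc
  obtain ⟨x, hxs, hxt⟩ := hst
  obtain ⟨y, hys, hyt⟩ := hs_t
  have hst' : s ⊆ interior t :=
    hs.subset_left_of_subset_union isOpen_interior isClosed_closure.isOpen_compl
      (disjoint_compl_right.mono_left interior_subset_closure) hsub
      ⟨x, hxs, (hsub hxs).resolve_right (not_not.2 (subset_closure hxt))⟩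
  exact hyt (interior_subset (hst' hys))

section RealLine

variable {U : Set ℝ} {u : ℝ}

lemma IsOpen.exists_mem_frontier_gt (hU : IsOpen U) (hu : u ∈ U) (h : ¬ Ici u ⊆ U) :
    ∃ b ∈ frontier U, u < b := by
  obtain ⟨c, huc, hc⟩ := not_subset.1 h
  obtain ⟨b, hb, hbU⟩ := isPreconnected_Icc.inter_frontier_nonempty
    ⟨u, left_mem_Icc.2 huc, hu⟩ ⟨c, right_mem_Icc.2 huc, hc⟩
  refine ⟨b, hbU, hb.1.lt_of_ne ?_⟩
  rintro rfl
  exact hU.inter_frontier_eq.subset ⟨hu, hbU⟩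

lemma IsOpen.exists_mem_frontier_lt (hU : IsOpen U) (hu : u ∈ U) (h : ¬ Iic u ⊆ U) :
    ∃ a ∈ frontier U, a < u := by
  obtain ⟨c, hcu, hc⟩ := not_subset.1 h
  obtain ⟨a, ha, haU⟩ := isPreconnected_Icc.inter_frontier_nonempty
    ⟨u, right_mem_Icc.2 hcu, hu⟩ ⟨c, left_mem_Icc.2 hcu, hc⟩
  refine ⟨a, haU, ha.2.lt_of_ne ?_⟩
  rintro rfl
  exact hU.inter_frontier_eq.subset ⟨hu, haU⟩

end RealLine

lemma ofReal_add_le_wper (f : ℝ → ℝ) {U : Set ℝ} {a b : ℝ} (ha : a ∈ frontier U)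
    (hb : b ∈ frontier U) (hab : a ≠ b) :
    ENNReal.ofReal (f a) + ENNReal.ofReal (f b) ≤ wper f U := by
  have := ENNReal.sum_le_tsum (f := fun x : frontier U => ENNReal.ofReal (f x))
    {⟨a, ha⟩, ⟨b, hb⟩}
  rwa [Finset.sum_pair (by simpa using hab)] at this

lemma wper_Ioo (f : ℝ → ℝ) {a b : ℝ} (hab : a < b) :
    wper f (Ioo a b) = ENNReal.ofReal (f a) + ENNReal.ofReal (f b) := by
  rw [wper, frontier_Ioo hab, ← Finset.coe_pair,
    Finset.tsum_subtype' _ fun y => ENNReal.ofReal (f y), Finset.sum_pair hab.ne]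

lemma wvol_Ioo {f : ℝ → ℝ} (hf : Continuous f) (hf0 : ∀ x, 0 ≤ f x) {a b : ℝ}
    (hab : a ≤ b) :
    wvol f (Ioo a b) = ENNReal.ofReal (∫ x in a..b, f x) := by
  rw [wvol, ← ofReal_integral_eq_lintegral_ofReal
      (hf.integrableOn_Icc.mono_set Ioo_subset_Icc_self) (ae_of_all _ hf0),
    intervalIntegral.integral_of_le hab, integral_Ioc_eq_integral_Ioo]

lemma wvol_eq_top_iff_not_integrableOn {f : ℝ → ℝ} (hf : Continuous f) (hf0 : ∀ x, 0 ≤ f x)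
    {s : Set ℝ} :
    wvol f s = ⊤ ↔ ¬ IntegrableOn f s := by
  rw [IntegrableOn, Integrable, hasFiniteIntegral_iff_ofReal (ae_of_all _ hf0), wvol]
  simp [hf.aestronglyMeasurable]

lemma wvol_eq_top_of_le {f : ℝ → ℝ} {c : ℝ} (hc : 0 < c) {s : Set ℝ}
    (hs : MeasurableSet s) (hcf : ∀ x ∈ s, c ≤ f x) (hvol : volume s = ⊤) : wvol f s = ⊤ := by
  refine top_le_iff.1 ?_
  calc ⊤ = ENNReal.ofReal c * volume s := by
        rw [hvol, ENNReal.mul_top (ENNReal.ofReal_pos.2 hc).ne']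
    _ = ∫⁻ _ in s, ENNReal.ofReal c := (setLIntegral_const s _).symm
    _ ≤ wvol f s := setLIntegral_mono' hs fun x hx => ENNReal.ofReal_le_ofReal (hcf x hx)

lemma wvol_comp_neg (f : ℝ → ℝ) (s : Set ℝ) : wvol (fun x => f (-x)) s = wvol f (-s) := by
  have := (Measure.measurePreserving_neg volume).setLIntegral_comp_preimage_emb
    (Homeomorph.neg ℝ).measurableEmbedding (fun y => ENNReal.ofReal (f y)) (-s)
  simpa [wvol] using this

lemma wper_comp_neg (f : ℝ → ℝ) (s : Set ℝ) : wper (fun x => f (-x)) s = wper f (-s) := by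
  have := (Homeomorph.neg ℝ).image_frontier s
  simp only [Homeomorph.coe_neg, image_neg_eq_neg] at this
  rw [wper, wper, ← this, ← image_neg_eq_neg]
  exact (tsum_image (fun y => ENNReal.ofReal (f y)) neg_injective.injOn).symm

lemma isoProfile_comp_neg (f : ℝ → ℝ) (V : ℝ) :
    isoProfile (fun x => f (-x)) V = isoProfile f V := by
  refine congrArg sInf (ext fun p => ⟨?_, ?_⟩)
  · rintro ⟨U, hU, hv, rfl⟩
    exact ⟨-U, hU.neg, by rwa [← wvol_comp_neg], (wper_comp_neg f U).symm⟩
  · rintro ⟨U, hU, hv, rfl⟩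
    refine ⟨-U, hU.neg, ?_, ?_⟩ <;> simp only [wvol_comp_neg, wper_comp_neg, neg_neg, hv]

lemma ofReal_two_mul_iInf_le_wper {f : ℝ → ℝ} (hf0 : ∀ x, 0 ≤ f x)
    (hIic : ∀ t, wvol f (Iic t) = ⊤) (hIci : ∀ t, wvol f (Ici t) = ⊤) {U : Set ℝ} (hU : IsOpen U)
    (hne : U.Nonempty) (hfin : wvol f U ≠ ⊤) : ENNReal.ofReal (2 * ⨅ x, f x) ≤ wper f U := by
  obtain ⟨u, hu⟩ := hne
  have not_subset_of_top : ∀ s, wvol f s = ⊤ → ¬ s ⊆ U := fun s hs hsU =>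
    hfin (top_le_iff.1 (hs ▸ lintegral_mono_set hsU))
  obtain ⟨a, ha, hau⟩ := hU.exists_mem_frontier_lt hu (not_subset_of_top _ (hIic u))
  obtain ⟨b, hb, hub⟩ := hU.exists_mem_frontier_gt hu (not_subset_of_top _ (hIci u))
  have hbdd : BddBelow (range f) := ⟨0, forall_mem_range.2 hf0⟩
  calc ENNReal.ofReal (2 * ⨅ x, f x) ≤ ENNReal.ofReal (f a + f b) :=
        ENNReal.ofReal_le_ofReal (by linarith [ciInf_le hbdd a, ciInf_le hbdd b])
    _ = ENNReal.ofReal (f a) + ENNReal.ofReal (f b) := ENNReal.ofReal_add (hf0 a) (hf0 b)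
    _ ≤ wper f U := ofReal_add_le_wper f ha hb (hau.trans hub).ne

lemma isoProfile_eq_of_tendsto {f : ℝ → ℝ} (hf0 : ∀ x, 0 ≤ f x)
    (hIic : ∀ t, wvol f (Iic t) = ⊤) (hIci : ∀ t, wvol f (Ici t) = ⊤) {V : ℝ} (hV : 0 < V)
    {U : ℕ → Set ℝ} (hUo : ∀ k, IsOpen (U k)) (hUv : ∀ k, wvol f (U k) = ENNReal.ofReal V)
    (hUp : Tendsto (fun k => wper f (U k)) atTop (𝓝 (ENNReal.ofReal (2 * ⨅ x, f x)))) :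
    isoProfile f V = ENNReal.ofReal (2 * ⨅ x, f x) := by
  refine le_antisymm (ge_of_tendsto' hUp fun k => sInf_le ⟨U k, hUo k, hUv k, rfl⟩) (le_sInf ?_)
  rintro _ ⟨W, hWo, hWv, rfl⟩
  refine ofReal_two_mul_iInf_le_wper hf0 hIic hIci hWo (nonempty_iff_ne_empty.2 ?_)
    (hWv ▸ ENNReal.ofReal_ne_top)
  rintro rfl
  simp only [wvol, Measure.restrict_empty, lintegral_zero_measure] at hWv
  exact (ENNReal.ofReal_pos.2 hV).ne' hWv.symm

lemma exists_intervalIntegral_eq_of_not_integrableOn_Iic {f : ℝ → ℝ} (hf : Continuous f)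
    (hf0 : ∀ x, 0 ≤ f x) {t : ℝ} (ht : ¬ IntegrableOn f (Iic t)) {V : ℝ} (hV : 0 < V) :
    ∃ a < t, ∫ x in a..t, f x = V := by
  by_contra! h
  have hG : Continuous fun a => ∫ x in a..t, f x :=
    (intervalIntegral.continuous_primitive (fun a b => hf.intervalIntegrable a b) t).neg.congr
      fun a => (intervalIntegral.integral_symm t a).symm
  have hle : ∀ a ≤ t, ∫ x in a..t, f x ≤ V := fun a hat => by
    by_contra! hlt
    obtain ⟨c, hc, hcV⟩ := intermediate_value_Icc' hat hG.continuousOn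
      ⟨by simpa using hV.le, hlt.le⟩
    rcases hc.2.lt_or_eq with hct | rfl
    · exact h c hct hcV
    · simp [hV.ne] at hcV
  refine ht (integrableOn_Iic_of_intervalIntegral_norm_bounded V t
    (fun _ => hf.integrableOn_Icc.mono_set Ioc_subset_Icc_self) tendsto_id ?_)
  filter_upwards [eventually_le_atBot t] with a hat
  simpa [Real.norm_of_nonneg (hf0 _)] using hle a hat

lemma tendsto_wper_Ioo_of_monotone {f : ℝ → ℝ} (hf0 : ∀ x, 0 ≤ f x) (hmono : Monotone f)
    {ι : Type*} {l : Filter ι} {a b : ι → ℝ} (hab : ∀ k, a k < b k) (hb : Tendsto b l atBot) :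
    Tendsto (fun k => wper f (Ioo (a k) (b k))) l (𝓝 (ENNReal.ofReal (2 * ⨅ x, f x))) := by
  have hbdd : BddBelow (range f) := ⟨0, forall_mem_range.2 hf0⟩
  have hfb : Tendsto (fun k => f (b k)) l (𝓝 (⨅ x, f x)) :=
    (tendsto_atBot_ciInf hmono hbdd).comp hb
  have hfa : Tendsto (fun k => f (a k)) l (𝓝 (⨅ x, f x)) :=
    tendsto_of_tendsto_of_tendsto_of_le_of_le tendsto_const_nhds hfb
      (fun k => ciInf_le hbdd _) (fun k => hmono (hab k).le)
  simp_rw [wper_Ioo f (hab _), ← ENNReal.ofReal_add (hf0 _) (hf0 _), two_mul]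
  exact ENNReal.tendsto_ofReal (hfa.add hfb)

lemma isoProfile_eq_and_exists_Ioo_of_monotone {f : ℝ → ℝ} (hf : Continuous f)
    (hpos : ∀ x, 0 < f x) (hmono : Monotone f) (hIic : ∀ t, wvol f (Iic t) = ⊤) {V : ℝ}
    (hV : 0 < V) :
    isoProfile f V = ENNReal.ofReal (2 * ⨅ x, f x) ∧
      ∃ a b : ℕ → ℝ, (∀ k, a k < b k) ∧ (∀ k, wvol f (Ioo (a k) (b k)) = ENNReal.ofReal V) ∧
        Tendsto b atTop atBot ∧
        Tendsto (fun k => wper f (Ioo (a k) (b k))) atTop (𝓝 (ENNReal.ofReal (2 * ⨅ x, f x))) := by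
  have hf0 : ∀ x, 0 ≤ f x := fun x => (hpos x).le
  have hIci : ∀ t, wvol f (Ici t) = ⊤ := fun t =>
    wvol_eq_top_of_le (hpos t) measurableSet_Ici (fun x hx => hmono hx) Real.volume_Ici
  choose a hab hint using fun k : ℕ => exists_intervalIntegral_eq_of_not_integrableOn_Iic hf hf0
    ((wvol_eq_top_iff_not_integrableOn hf hf0).1 (hIic (-k))) hV
  have hvol : ∀ k, wvol f (Ioo (a k) (-k)) = ENNReal.ofReal V := fun k => by
    rw [wvol_Ioo hf hf0 (hab k).le, hint k]
  have hb : Tendsto (fun k : ℕ => -(k : ℝ)) atTop atBot :=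
    tendsto_neg_atBot_iff.2 tendsto_natCast_atTop_atTop
  have hper := tendsto_wper_Ioo_of_monotone hf0 hmono hab hb
  exact ⟨isoProfile_eq_of_tendsto hf0 hIic hIci hV (fun _ => isOpen_Ioo) hvol hper,
    a, _, hab, hvol, hb, hper⟩

/-- For a continuous positive monotone density on `ℝ` whose infimum
end `E` has infinite measure, the isoperimetric profile at any volume `V > 0` equals
`2 f(E) = 2 inf f`, and it is approached by a sequence of bounded intervals of weighted
volume `V` going off to `E`.  (`E = −∞` when `f` is nondecreasing, `E = +∞` when `f`
is nonincreasing; by monotonicity `f(E) = ⨅ x, f x`.) -/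
theorem profile_eq_two_inf_of_monotone_infinite_end
    (f : ℝ → ℝ) (hcont : Continuous f) (hpos : ∀ x, 0 < f x)
    (V : ℝ) (hV : 0 < V) :
    (Monotone f → (∀ a : ℝ, ¬ IntegrableOn f (Set.Iic a)) →
      sInf {p : ENNReal | ∃ U : Set ℝ, IsOpen U ∧ wvol f U = ENNReal.ofReal V ∧
          wper f U = p} = ENNReal.ofReal (2 * ⨅ x : ℝ, f x) ∧
      ∃ a b : ℕ → ℝ, (∀ k, a k < b k) ∧
        (∀ k, wvol f (Set.Ioo (a k) (b k)) = ENNReal.ofReal V) ∧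
        Tendsto b atTop atBot ∧
        Tendsto (fun k => wper f (Set.Ioo (a k) (b k))) atTop
          (nhds (ENNReal.ofReal (2 * ⨅ x : ℝ, f x)))) ∧
    (Antitone f → (∀ a : ℝ, ¬ IntegrableOn f (Set.Ici a)) →
      sInf {p : ENNReal | ∃ U : Set ℝ, IsOpen U ∧ wvol f U = ENNReal.ofReal V ∧
          wper f U = p} = ENNReal.ofReal (2 * ⨅ x : ℝ, f x) ∧
      ∃ a b : ℕ → ℝ, (∀ k, a k < b k) ∧
        (∀ k, wvol f (Set.Ioo (a k) (b k)) = ENNReal.ofReal V) ∧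
        Tendsto a atTop atTop ∧
        Tendsto (fun k => wper f (Set.Ioo (a k) (b k))) atTop
          (nhds (ENNReal.ofReal (2 * ⨅ x : ℝ, f x)))) := by
  have hf0 : ∀ x, 0 ≤ f x := fun x => (hpos x).le
  have hwvol_top : ∀ s, ¬ IntegrableOn f s → wvol f s = ⊤ := fun s =>
    (wvol_eq_top_iff_not_integrableOn hcont hf0).2
  refine ⟨fun hmono hnint => isoProfile_eq_and_exists_Ioo_of_monotone hcont hpos hmono
    (fun t => hwvol_top _ (hnint t)) hV, fun hanti hnint => ?_⟩
  obtain ⟨hprof, a, b, hab, hvol, hb, hper⟩ :=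
    isoProfile_eq_and_exists_Ioo_of_monotone (f := fun x => f (-x)) (hcont.comp continuous_neg)
      (fun x => hpos _) (fun x y hxy => hanti (neg_le_neg hxy))
      (fun t => by rw [wvol_comp_neg, neg_Iic]; exact hwvol_top _ (hnint _)) hV
  have hinf : ⨅ x, f (-x) = ⨅ x, f x := neg_surjective.iInf_comp f
  refine ⟨(isoProfile_comp_neg f V).symm.trans (hinf ▸ hprof), fun k => -b k, fun k => -a k,
    fun k => neg_lt_neg (hab k), fun k => ?_, tendsto_neg_atBot_atTop.comp hb, ?_⟩
  · rw [← neg_Ioo, ← wvol_comp_neg]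
    exact hvol k
  · simp_rw [← neg_Ioo, ← wper_comp_neg, ← hinf]
    exact hper
end

section
/- Let f = e^ψ be a continuous positive density on ℝ with ψ convex (f is log-convex), and suppose there is an end E ∈ {−∞, +∞} such that f is integrable on a neighborhood of E. Then for every V > 0 the half-line of weighted volume V containing E (an interval (−∞, x) if E = −∞, or (x, +∞) if E = +∞) is the unique isoperimetric region of volume V. -/
open Filter MeasureTheory Set

/-- `Ω` is an isoperimetric region (minimizer) of weighted volume `V` on the line. -/
def IsIsopRegion (f : ℝ → ℝ) (Ω : Set ℝ) (V : ENNReal) : Prop :=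
  IsOpen Ω ∧ wvol f Ω = V ∧
    ∀ U : Set ℝ, IsOpen U → wvol f U = V → wper f Ω ≤ wper f U

open Topology

/-!
Since `ψ` is convex, so is `f = exp ∘ ψ`. A positive convex function that is integrable near `-∞`
is strictly increasing: if `f y ≤ f x` for some `x < y`, convexity gives `f ≥ f x > 0` on
`(-∞, x]`. The volume `a ↦ vol (-∞, a)` is then continuous and strictly increasing, with limit
`0` at `-∞` and `∞` at `+∞`, so exactly one half-line `(-∞, x)` has volume `V`.

If a set `U` of volume `V` had all of its boundary points `< x`, then by connectedness
`[x, ∞)` would lie in `U`, making its volume infinite, or `U` would lie in some `(-∞, m)`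
with `m < x`, making its volume smaller than `V`. So `∂U` has a point `y ≥ x`, and
`P(U) ≥ f y ≥ f x = P(-∞, x)`. For a minimizer, equality forces `∂U = {x}`, hence `U = (-∞, x)`.
The end `+∞` is the mirror image under `x ↦ -x`.
-/

theorem ConvexOn.exp_comp {E : Type*} [AddCommGroup E] [Module ℝ E] {s : Set E} {ψ : E → ℝ}
    (hψ : ConvexOn ℝ s ψ) : ConvexOn ℝ s fun x => Real.exp (ψ x) :=
  ⟨hψ.1, fun x hx y hy a b ha hb hab =>
    calc Real.exp (ψ (a • x + b • y)) ≤ Real.exp (a • ψ x + b • ψ y) :=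
          Real.exp_le_exp.2 (hψ.2 hx hy ha hb hab)
      _ ≤ a • Real.exp (ψ x) + b • Real.exp (ψ y) :=
          convexOn_exp.2 (mem_univ _) (mem_univ _) ha hb hab⟩

theorem IsPreconnected.subset_interior_or_disjoint_closure {X : Type*} [TopologicalSpace X]
    {s u : Set X} (hs : IsPreconnected s) (h : Disjoint s (frontier u)) :
    s ⊆ interior u ∨ Disjoint s (closure u) := by
  refine (hs.subset_or_subset isOpen_interior isClosed_closure.isOpen_compl
    (disjoint_compl_right.mono_left interior_subset_closure) fun x hx => ?_).imp_right
    subset_compl_iff_disjoint_right.1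
  by_contra hx'
  simp only [mem_union, mem_compl_iff, not_or, not_not] at hx'
  exact h.ne_of_mem hx ⟨hx'.2, hx'.1⟩ rfl

theorem IsOpen.eq_Iio_of_frontier_eq_singleton {Ω : Set ℝ} {x : ℝ} (hΩ : IsOpen Ω)
    (hfr : frontier Ω = {x}) (hne : Ω.Nonempty) (hIoi : ¬ Ioi x ⊆ Ω) : Ω = Iio x := by
  have hx : x ∉ Ω := (disjoint_frontier_iff_isOpen.2 hΩ).notMem_of_mem_left (by simp [hfr])
  have hdisj : ∀ s ⊆ {x}ᶜ, IsPreconnected s → s ⊆ Ω ∨ Disjoint s Ω := fun s hs hsc =>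
    (hsc.subset_interior_or_disjoint_closure
      (hfr ▸ disjoint_singleton_right.2 fun h => hs h rfl)).imp
        (·.trans interior_subset) (·.mono_right subset_closure)
  have hΩIoi : Disjoint (Ioi x) Ω :=
    (hdisj _ (fun _ h => ne_of_gt h) isPreconnected_Ioi).resolve_left hIoi
  have hΩIio : Ω ⊆ Iio x := fun t ht => by
    rcases lt_trichotomy t x with h | rfl | h
    exacts [h, absurd ht hx, absurd rfl (hΩIoi.ne_of_mem h ht)]
  refine hΩIio.antisymm ((hdisj _ (fun _ h => ne_of_lt h) isPreconnected_Iio).resolve_right ?_)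
  obtain ⟨t, ht⟩ := hne
  exact fun h => h.ne_of_mem (hΩIio ht) ht rfl

theorem integrableOn_Iio_of_integrableOn_Iic {f : ℝ → ℝ} {a : ℝ} (hloc : LocallyIntegrable f)
    (h : IntegrableOn f (Iic a)) (b : ℝ) : IntegrableOn f (Iio b) :=
  (h.union (hloc.integrableOn_isCompact (isCompact_Icc (a := a) (b := b)))).mono_set
    fun t ht => (le_or_gt t a).imp id fun hat => ⟨hat.le, ht.le⟩

theorem intervalIntegrable_of_forall_integrableOn_Iio {f : ℝ → ℝ}
    (hint : ∀ a, IntegrableOn f (Iio a)) (a b : ℝ) : IntervalIntegrable f volume a b :=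
  ((hint (max a b + 1)).mono_set fun _ hx => hx.2.trans_lt (lt_add_one _)).intervalIntegrable

section WeightedVolume

variable {f : ℝ → ℝ}

theorem wvol_mono {s t : Set ℝ} (h : s ⊆ t) : wvol f s ≤ wvol f t :=
  lintegral_mono_set h

theorem wvol_eq_top_of_forall_le {s : Set ℝ} {c : ℝ} (hs : MeasurableSet s)
    (hs_top : volume s = ⊤) (hc : 0 < c) (h : ∀ x ∈ s, c ≤ f x) : wvol f s = ⊤ :=
  top_unique <| calc
    ⊤ = ∫⁻ _ in s, ENNReal.ofReal c := by
        rw [setLIntegral_const, hs_top, ENNReal.mul_top (ENNReal.ofReal_pos.2 hc).ne']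
    _ ≤ wvol f s := setLIntegral_mono' hs fun x hx => ENNReal.ofReal_le_ofReal (h x hx)

theorem wvol_eq_top_of_Ioi_subset (hpos : ∀ x, 0 < f x) (hf : Monotone f) {s : Set ℝ} {a : ℝ}
    (h : Ioi a ⊆ s) : wvol f s = ⊤ :=
  top_unique <| (wvol_eq_top_of_forall_le measurableSet_Ioi Real.volume_Ioi (hpos a)
    fun _ hx => hf (le_of_lt hx)).symm.le.trans (wvol_mono h)

theorem wvol_Iio_eq_ofReal_integral (hnonneg : ∀ x, 0 ≤ f x) {a : ℝ}
    (hint : IntegrableOn f (Iio a)) : wvol f (Iio a) = ENNReal.ofReal (∫ x in Iio a, f x) :=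
  (ofReal_integral_eq_lintegral_ofReal hint (Eventually.of_forall hnonneg)).symm

theorem wvol_Iio_ne_top (hnonneg : ∀ x, 0 ≤ f x) {a : ℝ} (hint : IntegrableOn f (Iio a)) :
    wvol f (Iio a) ≠ ⊤ := by
  rw [wvol_Iio_eq_ofReal_integral hnonneg hint]
  exact ENNReal.ofReal_ne_top

theorem continuous_wvol_Iio (hnonneg : ∀ x, 0 ≤ f x) (hint : ∀ a, IntegrableOn f (Iio a)) :
    Continuous fun a => wvol f (Iio a) := by
  have hwvol : (fun a => wvol f (Iio a)) =
      fun a => ENNReal.ofReal ((∫ x in Iio 0, f x) + ∫ x in (0 : ℝ)..a, f x) :=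
    funext fun a => by
      rw [wvol_Iio_eq_ofReal_integral hnonneg (hint a),
        ← intervalIntegral.integral_Iio_sub_Iio' (hint a) (hint 0), add_sub_cancel]
  rw [hwvol]
  exact ENNReal.continuous_ofReal.comp ((intervalIntegral.continuous_primitive
    (intervalIntegrable_of_forall_integrableOn_Iio hint) 0).const_add _)

theorem strictMono_wvol_Iio (hpos : ∀ x, 0 < f x) (hint : ∀ a, IntegrableOn f (Iio a)) :
    StrictMono fun a => wvol f (Iio a) := by
  intro a b hab
  have hlt : ∫ x in Iio a, f x < ∫ x in Iio b, f x := by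
    rw [← sub_pos, intervalIntegral.integral_Iio_sub_Iio' (hint b) (hint a)]
    exact intervalIntegral.intervalIntegral_pos_of_pos
      (intervalIntegrable_of_forall_integrableOn_Iio hint a b) hpos hab
  simp only [wvol_Iio_eq_ofReal_integral (fun x => (hpos x).le) (hint _)]
  exact (ENNReal.ofReal_lt_ofReal_iff ((setIntegral_nonneg measurableSet_Iio
    fun x _ => (hpos x).le).trans_lt hlt)).2 hlt

theorem tendsto_wvol_Iio_atBot (hnonneg : ∀ x, 0 ≤ f x) (hint : ∀ a, IntegrableOn f (Iio a)) :
    Tendsto (fun a => wvol f (Iio a)) atBot (𝓝 0) := by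
  simp only [wvol_Iio_eq_ofReal_integral hnonneg (hint _)]
  simpa [Function.comp_def] using
    (ENNReal.continuous_ofReal.tendsto 0).comp (tendsto_integral_Iio_zero tendsto_id)

variable (f) in
theorem tendsto_wvol_Iio_atTop :
    Tendsto (fun a => wvol f (Iio a)) atTop (𝓝 (wvol f univ)) := by
  have h := tendsto_measure_iUnion_atTop
    (μ := volume.withDensity fun x => ENNReal.ofReal (f x)) (monotone_Iio (α := ℝ))
  simp only [iUnion_Iio, Function.comp_def, withDensity_apply'] at h
  exact h

theorem exists_wvol_Iio_eq (hpos : ∀ x, 0 < f x) (hf : Monotone f)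
    (hint : ∀ a, IntegrableOn f (Iio a)) {V : ENNReal} (hV₀ : 0 < V) (hV : V ≠ ⊤) :
    ∃ a, wvol f (Iio a) = V := by
  have hlow := ((tendsto_wvol_Iio_atBot (fun x => (hpos x).le) hint).eventually_lt_const hV₀).exists
  have hup : ∃ b, V ≤ wvol f (Iio b) := by
    have h := tendsto_wvol_Iio_atTop f
    rw [wvol_eq_top_of_Ioi_subset hpos hf (subset_univ (Ioi 0))] at h
    exact (h.eventually_const_lt hV.lt_top).exists.imp fun _ => le_of_lt
  exact mem_range_of_exists_le_of_exists_ge (continuous_wvol_Iio (fun x => (hpos x).le) hint)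
    (hlow.imp fun _ => le_of_lt) hup

variable (f) in
theorem wper_Iio (a : ℝ) : wper f (Iio a) = ENNReal.ofReal (f a) := by
  rw [wper, frontier_Iio]
  exact tsum_singleton a fun x => ENNReal.ofReal (f x)

variable (f) in
theorem ofReal_le_wper {U : Set ℝ} {y : ℝ} (hy : y ∈ frontier U) :
    ENNReal.ofReal (f y) ≤ wper f U :=
  ENNReal.le_tsum (⟨y, hy⟩ : frontier U)

theorem frontier_eq_singleton_of_wper_le (hpos : ∀ x, 0 < f x) {U : Set ℝ} {y : ℝ}
    (hy : y ∈ frontier U) (h : wper f U ≤ ENNReal.ofReal (f y)) : frontier U = {y} := by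
  refine eq_singleton_iff_unique_mem.2 ⟨hy, fun z hz => by_contra fun hzy => ?_⟩
  have hpair := ENNReal.sum_le_tsum (f := fun x : frontier U => ENNReal.ofReal (f x))
    {⟨y, hy⟩, ⟨z, hz⟩}
  rw [Finset.sum_pair (by simpa using Ne.symm hzy)] at hpair
  exact (ENNReal.lt_add_right ENNReal.ofReal_ne_top (ENNReal.ofReal_pos.2 (hpos z)).ne').not_ge
    (hpair.trans h)

theorem ConvexOn.strictMono_of_integrableOn_Iic {a : ℝ} (hconv : ConvexOn ℝ univ f)
    (hpos : ∀ x, 0 < f x) (hint : IntegrableOn f (Iic a)) : StrictMono f := by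
  intro x y hxy
  by_contra! hyx
  have htop : wvol f (Iic (min x a)) = ⊤ :=
    wvol_eq_top_of_forall_le measurableSet_Iic Real.volume_Iic (hpos x) fun t ht =>
      hconv.le_left_of_right_le'' (mem_univ t) (mem_univ y) (ht.trans (min_le_left x a)) hxy hyx
  exact (hint.mono_set (Iic_subset_Iic.2 (min_le_right x a))).lintegral_lt_top.ne htop

theorem ConvexOn.strictAnti_of_integrableOn_Ici {a : ℝ} (hconv : ConvexOn ℝ univ f)
    (hpos : ∀ x, 0 < f x) (hint : IntegrableOn f (Ici a)) : StrictAnti f := by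
  intro x y hxy
  by_contra! hxy'
  have htop : wvol f (Ici (max y a)) = ⊤ :=
    wvol_eq_top_of_forall_le measurableSet_Ici Real.volume_Ici (hpos y) fun t ht =>
      hconv.le_right_of_left_le'' (mem_univ x) (mem_univ t) hxy ((le_max_left y a).trans ht) hxy'
  exact (hint.mono_set (Ici_subset_Ici.2 (le_max_right y a))).lintegral_lt_top.ne htop

theorem exists_mem_frontier_ge_of_wvol_eq (hpos : ∀ x, 0 < f x) (hf : Monotone f)
    (hint : ∀ a, IntegrableOn f (Iio a)) {U : Set ℝ} {a : ℝ} (hU : wvol f U = wvol f (Iio a)) :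
    ∃ y ∈ frontier U, a ≤ y := by
  by_contra! hfr
  rcases isPreconnected_Ici.subset_interior_or_disjoint_closure (s := Ici a) (u := U)
    (disjoint_left.2 fun y hy hyU => (hfr y hyU).not_ge hy) with hsub | hdisj
  · refine wvol_Iio_ne_top (fun x => (hpos x).le) (hint a) (hU ▸ ?_)
    exact wvol_eq_top_of_Ioi_subset hpos hf (Ioi_subset_Ici_self.trans (hsub.trans interior_subset))
  · obtain ⟨l, hla, hl⟩ := exists_Ioc_subset_of_mem_nhds
      (isClosed_closure.isOpen_compl.mem_nhds (hdisj.notMem_of_mem_left self_mem_Ici))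
      (exists_lt a)
    obtain ⟨m, hlm, hma⟩ := exists_between hla
    have hUm : U ⊆ Iio m := fun t ht => by
      rw [mem_Iio]
      by_contra! hmt
      rcases le_or_gt a t with hat | hta
      · exact hdisj.ne_of_mem hat (subset_closure ht) rfl
      · exact hl ⟨hlm.trans_le hmt, hta.le⟩ (subset_closure ht)
    exact ((wvol_mono hUm).trans_lt (strictMono_wvol_Iio hpos hint hma)).ne hU

theorem isIsopRegion_Iio (hpos : ∀ x, 0 < f x) (hf : Monotone f)
    (hint : ∀ a, IntegrableOn f (Iio a)) (a : ℝ) : IsIsopRegion f (Iio a) (wvol f (Iio a)) := by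
  refine ⟨isOpen_Iio, rfl, fun U _ hU => ?_⟩
  obtain ⟨y, hy, hay⟩ := exists_mem_frontier_ge_of_wvol_eq hpos hf hint hU
  rw [wper_Iio]
  exact (ENNReal.ofReal_le_ofReal (hf hay)).trans (ofReal_le_wper f hy)

theorem IsIsopRegion.eq_Iio (hpos : ∀ x, 0 < f x) (hf : StrictMono f)
    (hint : ∀ a, IntegrableOn f (Iio a)) {Ω : Set ℝ} {a : ℝ}
    (hΩ : IsIsopRegion f Ω (wvol f (Iio a))) (ha : wvol f (Iio a) ≠ 0) : Ω = Iio a := by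
  obtain ⟨hΩo, hΩv, hΩmin⟩ := hΩ
  have hper : wper f Ω ≤ ENNReal.ofReal (f a) := wper_Iio f a ▸ hΩmin _ isOpen_Iio rfl
  obtain ⟨y, hy, hay⟩ := exists_mem_frontier_ge_of_wvol_eq hpos hf.monotone hint hΩv
  obtain rfl : y = a := le_antisymm (hf.le_iff_le.1 <| (ENNReal.ofReal_le_ofReal_iff
    (hpos a).le).1 <| (ofReal_le_wper f hy).trans hper) hay
  refine hΩo.eq_Iio_of_frontier_eq_singleton (frontier_eq_singleton_of_wper_le hpos hy hper)
    (nonempty_iff_ne_empty.2 ?_) fun hIoi => ?_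
  · rintro rfl
    exact ha (hΩv.symm.trans (setLIntegral_empty _))
  · exact wvol_Iio_ne_top (fun x => (hpos x).le) (hint y)
      (hΩv ▸ wvol_eq_top_of_Ioi_subset hpos hf.monotone hIoi)

variable (f) in
theorem wvol_comp_preimage {g : ℝ → ℝ} (hg : MeasurePreserving g) (hge : MeasurableEmbedding g)
    (s : Set ℝ) : wvol (f ∘ g) (g ⁻¹' s) = wvol f s :=
  hg.setLIntegral_comp_preimage_emb hge (fun x => ENNReal.ofReal (f x)) s

variable (f) in
theorem wper_comp_preimage (e : ℝ ≃ₜ ℝ) (s : Set ℝ) : wper (f ∘ e) (e ⁻¹' s) = wper f s := by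
  rw [wper, wper, ← e.preimage_frontier]
  exact Equiv.tsum_eq (e.toEquiv.subtypeEquiv fun _ => Iff.rfl)
    fun x : frontier s => ENNReal.ofReal (f x)

theorem isIsopRegion_comp_preimage_iff (e : ℝ ≃ₜ ℝ) (he : MeasurePreserving e) {s : Set ℝ}
    {V : ENNReal} : IsIsopRegion (f ∘ e) (e ⁻¹' s) V ↔ IsIsopRegion f s V := by
  rw [IsIsopRegion, IsIsopRegion, e.injective.preimage_surjective.forall]
  simp only [e.isOpen_preimage, wvol_comp_preimage f he e.measurableEmbedding,
    wper_comp_preimage]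

theorem exists_isIsopRegion_Iio_of_strictMono (hpos : ∀ x, 0 < f x) (hf : StrictMono f)
    (hint : IntegrableOn f (Iic 0)) {V : ℝ} (hV : 0 < V) :
    ∃ x : ℝ, wvol f (Iio x) = ENNReal.ofReal V ∧
      IsIsopRegion f (Iio x) (ENNReal.ofReal V) ∧
      ∀ Ω : Set ℝ, IsIsopRegion f Ω (ENNReal.ofReal V) → Ω = Iio x := by
  have hint' := integrableOn_Iio_of_integrableOn_Iic hf.monotone.locallyIntegrable hint
  obtain ⟨x, hx⟩ := exists_wvol_Iio_eq hpos hf.monotone hint' (ENNReal.ofReal_pos.2 hV)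
    ENNReal.ofReal_ne_top
  refine ⟨x, hx, hx ▸ isIsopRegion_Iio hpos hf.monotone hint' x, fun Ω hΩ => ?_⟩
  exact (hx ▸ hΩ).eq_Iio hpos hf hint' (hx ▸ (ENNReal.ofReal_pos.2 hV).ne')

theorem exists_isIsopRegion_Ioi_of_strictAnti (hpos : ∀ x, 0 < f x) (hf : StrictAnti f)
    (hint : IntegrableOn f (Ici 0)) {V : ℝ} (hV : 0 < V) :
    ∃ x : ℝ, wvol f (Ioi x) = ENNReal.ofReal V ∧
      IsIsopRegion f (Ioi x) (ENNReal.ofReal V) ∧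
      ∀ Ω : Set ℝ, IsIsopRegion f Ω (ENNReal.ofReal V) → Ω = Ioi x := by
  set e := Homeomorph.neg ℝ
  have he : MeasurePreserving e := Measure.measurePreserving_neg volume
  have hIoi : ∀ x, e ⁻¹' Ioi (-x) = Iio x := by simp [e]
  have hint' : IntegrableOn (f ∘ e) (Iic 0) := by
    rwa [← he.integrableOn_comp_preimage e.measurableEmbedding,
      show e ⁻¹' Ici 0 = Iic 0 by simp [e]] at hint
  obtain ⟨x, hvol, hreg, huniq⟩ := exists_isIsopRegion_Iio_of_strictMono (fun x => hpos (e x))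
    (hf.comp fun _ _ => neg_lt_neg) hint' hV
  refine ⟨-x, ?_, ?_, fun Ω hΩ => e.surjective.preimage_injective ?_⟩
  · rwa [← wvol_comp_preimage f he e.measurableEmbedding, hIoi]
  · rwa [← isIsopRegion_comp_preimage_iff e he, hIoi]
  · rw [hIoi]
    exact huniq _ ((isIsopRegion_comp_preimage_iff e he).2 hΩ)

end WeightedVolume

/-- For a log-convex density `f = e^ψ` on `ℝ` with one end `E` of
finite measure, the half-line of weighted volume `V` containing `E` is the unique
isoperimetric region of volume `V`, for every `V > 0`.  (The case `E = −∞` corresponds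
to integrability near `−∞`, i.e. on `(−∞,0]`, and `E = +∞` to integrability on
`[0,+∞)`.) -/
theorem halfline_unique_minimizer_logconvex_finite_end
    (ψ f : ℝ → ℝ) (hf : ∀ x : ℝ, f x = Real.exp (ψ x))
    (hconv : ConvexOn ℝ Set.univ ψ)
    (V : ℝ) (hV : 0 < V) :
    (IntegrableOn f (Set.Iic 0) →
      ∃ x : ℝ, wvol f (Set.Iio x) = ENNReal.ofReal V ∧
        IsIsopRegion f (Set.Iio x) (ENNReal.ofReal V) ∧
        ∀ Ω : Set ℝ, IsIsopRegion f Ω (ENNReal.ofReal V) → Ω = Set.Iio x) ∧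
    (IntegrableOn f (Set.Ici 0) →
      ∃ x : ℝ, wvol f (Set.Ioi x) = ENNReal.ofReal V ∧
        IsIsopRegion f (Set.Ioi x) (ENNReal.ofReal V) ∧
        ∀ Ω : Set ℝ, IsIsopRegion f Ω (ENNReal.ofReal V) → Ω = Set.Ioi x) := by
  have hpos : ∀ x, 0 < f x := fun x => hf x ▸ Real.exp_pos (ψ x)
  have hfconv : ConvexOn ℝ univ f := by simpa only [← hf] using hconv.exp_comp
  exact ⟨fun hint => exists_isIsopRegion_Iio_of_strictMono hpos
      (hfconv.strictMono_of_integrableOn_Iic hpos hint) hint hV,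
    fun hint => exists_isIsopRegion_Ioi_of_strictAnti hpos
      (hfconv.strictAnti_of_integrableOn_Ici hpos hint) hint hV⟩
end
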